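/- arXiv:1606.08116 — 2 statements merged into one kernel-verified Lean document; each statement's English description precedes it below -/
import Mathlib

section
/- For every nonempty finite word σ over 2^AP and all LTL formulas φ₁, φ₂: σ^ω ⊨ F(φ₁ ∧ Gφ₂) if and only if σ^ω ⊨ Fφ₁ ∧ Gφ₂. -/
/-- Syntax of LTL formulas (with general negation, next, until, weak until). -/
inductive LTL (AP : Type) : Type where
  | tru : LTL AP
  | atom : AP → LTL AP
  | neg : LTL AP → LTL AP
  | conj : LTL AP → LTL AP → LTL AP
  | disj : LTL AP → LTL AP → LTL AP
  | next : LTL AP → LTL AP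
  | untl : LTL AP → LTL AP → LTL AP
  | wuntl : LTL AP → LTL AP → LTL AP

/-- Infinite words over the alphabet `2^AP`. -/
def Word (AP : Type) := ℕ → Set AP

/-- The suffix `ρ[i..]` of an infinite word. -/
def Word.suffix {AP : Type} (ρ : Word AP) (i : ℕ) : Word AP := fun n => ρ (n + i)

/-- Satisfaction of an LTL formula on an infinite word. -/
def sat {AP : Type} : Word AP → LTL AP → Prop
  | _, .tru => True
  | ρ, .atom a => a ∈ ρ 0
  | ρ, .neg φ => ¬ sat ρ φ
  | ρ, .conj φ ψ => sat ρ φ ∧ sat ρ ψ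
  | ρ, .disj φ ψ => sat ρ φ ∨ sat ρ ψ
  | ρ, .next φ => sat (ρ.suffix 1) φ
  | ρ, .untl φ ψ => ∃ i, sat (ρ.suffix i) ψ ∧ ∀ j < i, sat (ρ.suffix j) φ
  | ρ, .wuntl φ ψ =>
      (∀ i, sat (ρ.suffix i) φ) ∨ ∃ i, sat (ρ.suffix i) ψ ∧ ∀ j < i, sat (ρ.suffix j) φ

/-- Eventually: `F φ = ⊤ U φ`. -/
def LTL.ev {AP : Type} (φ : LTL AP) : LTL AP := LTL.untl LTL.tru φ

/-- Always: `G φ = φ W ⊥`. -/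
def LTL.alw {AP : Type} (φ : LTL AP) : LTL AP := LTL.wuntl φ (LTL.neg LTL.tru)

/-- Semantic equivalence of formulas on all infinite words. -/
def LTLequiv {AP : Type} (φ ψ : LTL AP) : Prop := ∀ ρ : Word AP, sat ρ φ ↔ sat ρ ψ

/-- Prepend a finite word `l` to an infinite word `ρ`. -/
def prepend {AP : Type} (l : List (Set AP)) (ρ : Word AP) : Word AP :=
  fun i => if h : i < l.length then l.get ⟨i, h⟩ else ρ (i - l.length)

/-- A fairness formula: satisfaction is closed under suffixes and under prepending
arbitrary finite prefixes. -/
def Fairness {AP : Type} (φ : LTL AP) : Prop :=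
  (∀ ρ : Word AP, sat ρ φ → ∀ i, sat (ρ.suffix i) φ) ∧
  (∀ ρ : Word AP, sat ρ φ → ∀ ρ₁ : List (Set AP), sat (prepend ρ₁ ρ) φ)

/-- The cyclic (periodic) word `σ^ω` obtained by repeating a nonempty finite word `σ`. -/
def cyc {AP : Type} (σ : List (Set AP)) (h : σ ≠ []) : Word AP :=
  fun i => σ.get ⟨i % σ.length, Nat.mod_lt i (List.length_pos_iff.mpr h)⟩

/-- Propositional formulas: atoms and negated atoms combined with `∧`, `∨`. -/
inductive PropForm (AP : Type) : Type where
  | atom : AP → PropForm AP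
  | natom : AP → PropForm AP
  | conj : PropForm AP → PropForm AP → PropForm AP
  | disj : PropForm AP → PropForm AP → PropForm AP

/-- Satisfaction of a propositional formula at a single letter `A ∈ 2^AP`. -/
def psat {AP : Type} (A : Set AP) : PropForm AP → Prop
  | .atom a => a ∈ A
  | .natom a => a ∉ A
  | .conj l₁ l₂ => psat A l₁ ∧ psat A l₂
  | .disj l₁ l₂ => psat A l₁ ∨ psat A l₂

/-- Embedding of propositional formulas into LTL. -/
def PropForm.toLTL {AP : Type} : PropForm AP → LTL AP
  | .atom a => .atom a
  | .natom a => .neg (.atom a)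
  | .conj l₁ l₂ => .conj l₁.toLTL l₂.toLTL
  | .disj l₁ l₂ => .disj l₁.toLTL l₂.toLTL

/-- A finite Kripke structure with a total transition relation. -/
structure Kripke (AP : Type) where
  S : Type
  [fin : Fintype S]
  init : S
  T : S → S → Prop
  total : ∀ s, ∃ t, T s t
  L : S → Set AP

/-- `π` is an infinite path of `K` starting at the initial state. -/
def Kripke.IsPath {AP : Type} (K : Kripke AP) (π : ℕ → K.S) : Prop :=
  π 0 = K.init ∧ ∀ i, K.T (π i) (π (i + 1))

/-- There is a nonempty finite path from `s` to `t` staying inside `B`. -/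
def Kripke.ConnIn {AP : Type} (K : Kripke AP) (B : Set K.S) (s t : K.S) : Prop :=
  ∃ n > 0, ∃ f : ℕ → K.S, f 0 = s ∧ f n = t ∧
    (∀ i < n, K.T (f i) (f (i + 1))) ∧ (∀ i ≤ n, f i ∈ B)

/-- `B` is a nontrivial strongly connected set of states. -/
def Kripke.IsSCSet {AP : Type} (K : Kripke AP) (B : Set K.S) : Prop :=
  ∀ s ∈ B, ∀ t ∈ B, K.ConnIn B s t

/-- Some state of `B` is reachable from the initial state. -/
def Kripke.Reachable {AP : Type} (K : Kripke AP) (B : Set K.S) : Prop :=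
  ∃ s ∈ B, ∃ n, ∃ f : ℕ → K.S, f 0 = K.init ∧ f n = s ∧ ∀ i < n, K.T (f i) (f (i + 1))

/-- The periodic word `({a}{}{a,c})^ω`. -/
def word1 {AP : Type} (a c : AP) : Word AP :=
  fun i => if i % 3 = 0 then {a} else if i % 3 = 1 then ∅ else {a, c}

/-- The periodic word `({a}{a,c}{})^ω`. -/
def word2 {AP : Type} (a c : AP) : Word AP :=
  fun i => if i % 3 = 0 then {a} else if i % 3 = 1 then {a, c} else ∅

/- On `σ^ω`, `G φ₂` holds as soon as it holds on some suffix: the word has period `|σ|`,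
so each of its suffixes is also a suffix of every other one. -/

namespace Word

variable {AP : Type}

lemma suffix_suffix (ρ : Word AP) (i j : ℕ) : (ρ.suffix i).suffix j = ρ.suffix (j + i) := by
  funext n
  simp only [suffix, Nat.add_assoc]

lemma suffix_mul_eq_self {ρ : Word AP} {p : ℕ} (hρ : ρ.suffix p = ρ) (m : ℕ) :
    ρ.suffix (m * p) = ρ := by
  induction m with
  | zero => rw [Nat.zero_mul]; rfl
  | succ m ih => rw [Nat.succ_mul, Nat.add_comm, ← suffix_suffix, ih, hρ]

lemma exists_suffix_suffix_eq {ρ : Word AP} {p : ℕ} (hρ : ρ.suffix p = ρ) (hp : 0 < p)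
    (i k : ℕ) : ∃ j, (ρ.suffix i).suffix j = ρ.suffix k := by
  obtain ⟨q, rfl⟩ : ∃ q, p = q + 1 := ⟨p - 1, by omega⟩
  refine ⟨k + i * q, ?_⟩
  rw [suffix_suffix, show k + i * q + i = k + i * (q + 1) by ring, ← suffix_suffix,
    suffix_mul_eq_self hρ]

end Word

lemma cyc_suffix_length {AP : Type} (σ : List (Set AP)) (h : σ ≠ []) :
    (cyc σ h).suffix σ.length = cyc σ h := by
  funext n
  simp only [Word.suffix, cyc, Nat.add_mod_right]

section Semantics

variable {AP : Type} {ρ : Word AP} {φ : LTL AP}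

lemma sat_ev_iff : sat ρ φ.ev ↔ ∃ i, sat (ρ.suffix i) φ := by
  simp [LTL.ev, sat]

lemma sat_alw_iff : sat ρ φ.alw ↔ ∀ i, sat (ρ.suffix i) φ := by
  simp [LTL.alw, sat]

lemma sat_alw_suffix (h : sat ρ φ.alw) (i : ℕ) : sat (ρ.suffix i) φ.alw := by
  rw [sat_alw_iff] at h ⊢
  intro j
  rw [Word.suffix_suffix]
  exact h (j + i)

lemma sat_alw_of_sat_suffix_alw {p : ℕ} (hρ : ρ.suffix p = ρ) (hp : 0 < p) {i : ℕ}
    (h : sat (ρ.suffix i) φ.alw) : sat ρ φ.alw := by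
  rw [sat_alw_iff] at h ⊢
  intro k
  obtain ⟨j, hj⟩ := Word.exists_suffix_suffix_eq hρ hp i k
  exact hj ▸ h j

end Semantics

/-- On cyclic words: σ^ω ⊨ F(φ₁ ∧ Gφ₂) iff σ^ω ⊨ Fφ₁ ∧ Gφ₂. -/
theorem F_conj_G_c {AP : Type} (σ : List (Set AP)) (h : σ ≠ []) (φ₁ φ₂ : LTL AP) :
    sat (cyc σ h) ((φ₁.conj φ₂.alw).ev) ↔ sat (cyc σ h) (LTL.conj φ₁.ev φ₂.alw) := by
  simp only [sat_ev_iff, sat]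
  constructor
  · rintro ⟨i, h₁, h₂⟩
    exact ⟨⟨i, h₁⟩, sat_alw_of_sat_suffix_alw (cyc_suffix_length σ h)
      (List.length_pos_iff.mpr h) h₂⟩
  · rintro ⟨⟨i, h₁⟩, h₂⟩
    exact ⟨i, h₁, sat_alw_suffix h₂ i⟩
end

section
/- For every nonempty finite word σ over 2^AP and all LTL formulas φ₁, φ₂, φ₃: σ^ω ⊨ (φ₁ ∨ Gφ₂) U φ₃ if and only if σ^ω ⊨ (Gφ₂ ∧ Fφ₃) ∨ (φ₁ U φ₃). -/
/-! On a periodic word, `G φ₂` holding from some position on holds from every position, since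
every position recurs after it modulo the period. Hence if some step before the `φ₃`-witness of
`(φ₁ ∨ G φ₂) U φ₃` uses the disjunct `G φ₂`, the whole word satisfies `G φ₂ ∧ F φ₃`; otherwise
`φ₁ U φ₃` holds with the same witness. -/

section

variable {AP : Type}

lemma Word.suffix_suffix_s15 (ρ : Word AP) (i j : ℕ) :
    (ρ.suffix i).suffix j = ρ.suffix (j + i) :=
  funext fun k => by simp only [Word.suffix, Nat.add_assoc]

lemma sat_alw (ρ : Word AP) (φ : LTL AP) : sat ρ φ.alw ↔ ∀ i, sat (ρ.suffix i) φ := by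
  simp [LTL.alw, sat]

lemma sat_ev (ρ : Word AP) (φ : LTL AP) : sat ρ φ.ev ↔ ∃ i, sat (ρ.suffix i) φ := by
  simp [LTL.ev, sat]

lemma sat_alw_suffix_s15 {ρ : Word AP} {φ : LTL AP} (hφ : sat ρ φ.alw) (i : ℕ) :
    sat (ρ.suffix i) φ.alw := by
  rw [sat_alw] at hφ ⊢
  intro k
  rw [Word.suffix_suffix_s15]
  exact hφ _

lemma Function.Periodic.word_suffix_add_nat_mul {ρ : Word AP} {p : ℕ}
    (hρ : Function.Periodic ρ p) (i n : ℕ) : ρ.suffix (i + n * p) = ρ.suffix i :=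
  funext fun k => by
    simp only [Word.suffix, ← Nat.add_assoc]
    exact hρ.nat_mul n _

lemma Function.Periodic.sat_alw_of_sat_suffix_alw {ρ : Word AP} {p : ℕ}
    (hρ : Function.Periodic ρ p) (hp : 0 < p) {φ : LTL AP} {j : ℕ}
    (hφ : sat (ρ.suffix j) φ.alw) : sat ρ φ.alw := by
  rw [sat_alw] at hφ ⊢
  intro m
  have hj : j ≤ m + j * p := le_add_left (Nat.le_mul_of_pos_right j hp)
  have := hφ (m + j * p - j)
  rwa [Word.suffix_suffix_s15, Nat.sub_add_cancel hj, hρ.word_suffix_add_nat_mul] at this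

lemma cyc_periodic (σ : List (Set AP)) (h : σ ≠ []) :
    Function.Periodic (cyc σ h) σ.length := fun n => by
  simp [cyc]

end

/-- On cyclic words: σ^ω ⊨ (φ₁ ∨ Gφ₂) U φ₃ iff σ^ω ⊨ (Gφ₂ ∧ Fφ₃) ∨ (φ₁ U φ₃). -/
theorem disj_G_until_c {AP : Type} (σ : List (Set AP)) (h : σ ≠ [])
    (φ₁ φ₂ φ₃ : LTL AP) :
    sat (cyc σ h) ((φ₁.disj φ₂.alw).untl φ₃) ↔
      sat (cyc σ h) (LTL.disj (LTL.conj φ₂.alw φ₃.ev) (φ₁.untl φ₃)) := by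
  constructor
  · rintro ⟨i, hi, hpre⟩
    by_cases hφ₁ : ∀ j < i, sat ((cyc σ h).suffix j) φ₁
    · exact Or.inr ⟨i, hi, hφ₁⟩
    · push Not at hφ₁
      obtain ⟨j, hji, hnφ₁⟩ := hφ₁
      have hG : sat (cyc σ h) φ₂.alw :=
        (cyc_periodic σ h).sat_alw_of_sat_suffix_alw (List.length_pos_iff.mpr h)
          ((hpre j hji).resolve_left hnφ₁)
      exact Or.inl ⟨hG, (sat_ev _ _).2 ⟨i, hi⟩⟩
  · rintro (⟨hG, hF⟩ | ⟨i, hi, hpre⟩)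
    · obtain ⟨i, hi⟩ := (sat_ev _ _).1 hF
      exact ⟨i, hi, fun j _ => Or.inr (sat_alw_suffix_s15 hG j)⟩
    · exact ⟨i, hi, fun j hj => Or.inl (hpre j hj)⟩
end
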